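/- arXiv:1701.07524 — 5 statements merged into one kernel-verified Lean document; each statement's English description precedes it below -/
import Mathlib

section
/- In the greedy zero-forcing algorithm on a cluster, when message W_i can be delivered either from transmitter i-1 or from transmitter i without conflicting with previously activated messages, choosing transmitter i-1 is never worse: delivering from transmitter i-1 may conflict only with the future link (i+1, i), whereas delivering from transmitter i may conflict with either future link (i+1, i) or (i+1, i+1). Formally, the set of future links conflicting with (i, i-1) is a subset of the set of future links conflicting with (i, i). -/
/-- `(i, j)` (message `W_i` sent from transmitter `j`) conflicts with a future link
`(i', j')` (`i' > i`) iff they share a transmitter, or the transmission of `W_i` causes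
uncancelable interference at receiver `i'`, which requires
`j' ∈ {i, i+1} ∩ {i'-1, i'}`. -/
def FutureConflict (l l' : ℕ × ℕ) : Prop :=
  l.1 < l'.1 ∧
    (l.2 = l'.2 ∨ ((l'.2 = l.1 ∨ l'.2 = l.1 + 1) ∧ (l'.2 + 1 = l'.1 ∨ l'.2 = l'.1)))

/-- when message `W_i` can be delivered from transmitter `i-1` or from
transmitter `i`, choosing transmitter `i-1` is never worse: the set of future links
conflicting with `(i, i-1)` is a subset of the set of future links conflicting with
`(i, i)`. -/
theorem stmt5 (i : ℕ) (hi : 2 ≤ i) :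
    {l' : ℕ × ℕ | (l'.2 + 1 = l'.1 ∨ l'.2 = l'.1) ∧ FutureConflict (i, i - 1) l'} ⊆
    {l' : ℕ × ℕ | (l'.2 + 1 = l'.1 ∨ l'.2 = l'.1) ∧ FutureConflict (i, i) l'} := by
  rintro ⟨a,b⟩ ⟨hl, hlt, h⟩
  refine ⟨hl, hlt, ?_⟩
  simp only [FutureConflict] at *
  omega
end

section
/- In the greedy zero-forcing algorithm, whether message W_i can be delivered (and through which transmitter) depends only on the availability sets T_{i-2}, T_{i-1}, T_i, the channel coefficients H(k,l) for k, l ∈ {i-2, i-1, i, i+1}, and the decisions made for messages W_{i-2} and W_{i-1}; no information about users with index less than i-2 is needed. -/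
def Conflicts (l l' : ℕ × ℕ) : Prop :=
  FutureConflict l l' ∨ FutureConflict l' l ∨ (l.1 = l'.1 ∧ l ≠ l')

open Classical in
noncomputable def greedy (Ω : Finset (ℕ × ℕ)) : ℕ → Finset (ℕ × ℕ)
  | 0 => ∅
  | i + 1 =>
    let S := greedy Ω i
    if (i + 1, i) ∈ Ω ∧ ∀ l ∈ S, ¬ Conflicts l (i + 1, i) then insert (i + 1, i) S
    else if (i + 1, i + 1) ∈ Ω ∧ ∀ l ∈ S, ¬ Conflicts l (i + 1, i + 1) then
      insert (i + 1, i + 1) S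
    else S

/- Feasible links of the network `(H, T)` on `N` users: `(i, j)` with `j ∈ {i-1, i}`,
`j ∈ T i` and `H (i, j) ≠ 0`. -/
open Classical in
noncomputable def linkSet (H : ℕ × ℕ → ℝ) (T : ℕ → Finset ℕ) (N : ℕ) : Finset (ℕ × ℕ) :=
  (Finset.Icc 1 N ×ˢ Finset.Icc 0 N).filter
    (fun l => (l.2 + 1 = l.1 ∨ l.2 = l.1) ∧ l.2 ∈ T l.1 ∧ H (l.1, l.2) ≠ 0)

lemma greedy_shape (Ω : Finset (ℕ × ℕ)) (n : ℕ) {l : ℕ × ℕ} (hl : l ∈ greedy Ω n) :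
    ∃ k, k + 1 ≤ n ∧ (l = (k + 1, k) ∨ l = (k + 1, k + 1)) := by
  induction n with
  | zero => simp [greedy] at hl
  | succ n ih =>
    rw [greedy] at hl
    split_ifs at hl with h1 h2
    · rcases Finset.mem_insert.mp hl with h | h
      · exact ⟨n, le_rfl, Or.inl h⟩
      · obtain ⟨k, hk, h⟩ := ih h; exact ⟨k, hk.trans (Nat.le_succ n), h⟩
    · rcases Finset.mem_insert.mp hl with h | h
      · exact ⟨n, le_rfl, Or.inr h⟩
      · obtain ⟨k, hk, h⟩ := ih h; exact ⟨k, hk.trans (Nat.le_succ n), h⟩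
    · obtain ⟨k, hk, h⟩ := ih hl; exact ⟨k, hk.trans (Nat.le_succ n), h⟩

open Classical in
lemma filter_greedy_empty (Ω : Finset (ℕ × ℕ)) (n m : ℕ) (h : n ≤ m) :
    (greedy Ω n).filter (fun l => l.1 = m + 1) = ∅ := by
  rw [Finset.filter_eq_empty_iff]
  intro l hl
  obtain ⟨k, hk, h'⟩ := greedy_shape Ω n hl
  rcases h' with rfl | rfl <;> simp <;> omega

lemma noconf (p j k : ℕ) (hk : k + 1 ≤ p) (hj : p + 2 ≤ j) (hj2 : j ≤ p + 3)
    {l : ℕ × ℕ} (hl : l = (k + 1, k) ∨ l = (k + 1, k + 1)) : ¬ Conflicts l (p + 3, j) := by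
  rcases hl with rfl | rfl <;>
    simp only [Conflicts, FutureConflict, Prod.mk.injEq, ne_eq, not_or, not_and] <;> omega

open Classical in
lemma conf_mono (Ω Ω' : Finset (ℕ × ℕ)) (p j : ℕ) (hj1 : p + 2 ≤ j) (hj2 : j ≤ p + 3)
    (hfil : ∀ k, p + 1 ≤ k → k < p + 3 →
      (greedy Ω (p + 2)).filter (fun l => l.1 = k) =
      (greedy Ω' (p + 2)).filter (fun l => l.1 = k))
    (h : ∀ l ∈ greedy Ω (p + 2), ¬ Conflicts l (p + 3, j)) :
    ∀ l ∈ greedy Ω' (p + 2), ¬ Conflicts l (p + 3, j) := by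
  intro l hl hc
  obtain ⟨k, hk, hshape⟩ := greedy_shape _ _ hl
  by_cases hkp : k + 1 ≤ p
  · exact noconf p j k hkp hj1 hj2 hshape hc
  · have hl1 : l.1 = k + 1 := by rcases hshape with rfl | rfl <;> rfl
    have hmem : l ∈ (greedy Ω' (p + 2)).filter (fun l => l.1 = k + 1) := by
      simp [Finset.mem_filter, hl, hl1]
    rw [← hfil (k + 1) (by omega) (by omega)] at hmem
    exact h l (Finset.mem_filter.mp hmem).1 hc

open Classical in
lemma greedy_succ (Ω : Finset (ℕ × ℕ)) (n : ℕ) :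
    greedy Ω (n + 1) =
      if (n + 1, n) ∈ Ω ∧ ∀ l ∈ greedy Ω n, ¬ Conflicts l (n + 1, n) then
        insert (n + 1, n) (greedy Ω n)
      else if (n + 1, n + 1) ∈ Ω ∧ ∀ l ∈ greedy Ω n, ¬ Conflicts l (n + 1, n + 1) then
        insert (n + 1, n + 1) (greedy Ω n)
      else greedy Ω n := by
  rw [greedy]

/-- the greedy decision for message `W_i` depends only on the availability
sets `T_{i-2}, T_{i-1}, T_i`, the channel coefficients `H (k, l)` with
`k, l ∈ {i-2, ..., i+1}`, and the decisions made for messages `W_{i-2}` and `W_{i-1}`;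
no information about users with index less than `i-2` is needed. -/
theorem stmt7 (N i : ℕ) (hi : 3 ≤ i) (hiN : i ≤ N)
    (H H' : ℕ × ℕ → ℝ) (T T' : ℕ → Finset ℕ)
    (hT : ∀ k, i - 2 ≤ k → k ≤ i → T k = T' k)
    (hH : ∀ k l, i - 2 ≤ k → k ≤ i + 1 → i - 2 ≤ l → l ≤ i + 1 → H (k, l) = H' (k, l))
    (hprev : ∀ k, i - 2 ≤ k → k < i →
      (greedy (linkSet H T N) (i - 1)).filter (fun l => l.1 = k) =
      (greedy (linkSet H' T' N) (i - 1)).filter (fun l => l.1 = k)) :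
    (greedy (linkSet H T N) i).filter (fun l => l.1 = i) =
    (greedy (linkSet H' T' N) i).filter (fun l => l.1 = i) := by
  classical
  obtain ⟨p, rfl⟩ : ∃ p, i = p + 3 := ⟨i - 3, by omega⟩
  set Ω := linkSet H T N with hΩ
  set Ω' := linkSet H' T' N with hΩ'
  rw [show p + 3 - 1 = p + 2 from rfl] at hprev
  have hfil : ∀ k, p + 1 ≤ k → k < p + 3 →
      (greedy Ω (p + 2)).filter (fun l => l.1 = k) =
      (greedy Ω' (p + 2)).filter (fun l => l.1 = k) := by
    intro k h1 h2
    exact hprev k (by omega) (by omega)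
  have hmem : ∀ j, p + 2 ≤ j → j ≤ p + 3 → ((p + 3, j) ∈ Ω ↔ (p + 3, j) ∈ Ω') := by
    intro j hj1 hj2
    simp only [hΩ, hΩ', linkSet, Finset.mem_filter]
    rw [hT (p + 3) (by omega) le_rfl,
      hH (p + 3) j (by omega) (by omega) (by omega) (by omega)]
  have hconf : ∀ j, p + 2 ≤ j → j ≤ p + 3 →
      ((∀ l ∈ greedy Ω (p + 2), ¬ Conflicts l (p + 3, j)) ↔
       (∀ l ∈ greedy Ω' (p + 2), ¬ Conflicts l (p + 3, j))) := by
    intro j hj1 hj2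
    exact ⟨conf_mono Ω Ω' p j hj1 hj2 hfil,
      conf_mono Ω' Ω p j hj1 hj2 (fun k h1 h2 => (hfil k h1 h2).symm)⟩
  have hc1 := hconf (p + 2) (by omega) (by omega)
  have hc2 := hconf (p + 3) (by omega) (by omega)
  have hm1 := hmem (p + 2) (by omega) (by omega)
  have hm2 := hmem (p + 3) (by omega) (by omega)
  have hemp : (greedy Ω (p + 2)).filter (fun l => l.1 = p + 3) = ∅ :=
    filter_greedy_empty Ω (p + 2) (p + 2) le_rfl
  have hemp' : (greedy Ω' (p + 2)).filter (fun l => l.1 = p + 3) = ∅ :=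
    filter_greedy_empty Ω' (p + 2) (p + 2) le_rfl
  have hL : greedy Ω (p + 3) =
      if (p + 3, p + 2) ∈ Ω ∧ ∀ l ∈ greedy Ω (p + 2), ¬ Conflicts l (p + 3, p + 2) then
        insert (p + 3, p + 2) (greedy Ω (p + 2))
      else if (p + 3, p + 3) ∈ Ω ∧ ∀ l ∈ greedy Ω (p + 2), ¬ Conflicts l (p + 3, p + 3) then
        insert (p + 3, p + 3) (greedy Ω (p + 2))
      else greedy Ω (p + 2) := greedy_succ Ω (p + 2)
  have hR : greedy Ω' (p + 3) =
      if (p + 3, p + 2) ∈ Ω' ∧ ∀ l ∈ greedy Ω' (p + 2), ¬ Conflicts l (p + 3, p + 2) then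
        insert (p + 3, p + 2) (greedy Ω' (p + 2))
      else if (p + 3, p + 3) ∈ Ω' ∧ ∀ l ∈ greedy Ω' (p + 2), ¬ Conflicts l (p + 3, p + 3) then
        insert (p + 3, p + 3) (greedy Ω' (p + 2))
      else greedy Ω' (p + 2) := greedy_succ Ω' (p + 2)
  have e1 : ((p + 3, p + 2) ∈ Ω ∧ ∀ l ∈ greedy Ω (p + 2), ¬ Conflicts l (p + 3, p + 2)) ↔
      ((p + 3, p + 2) ∈ Ω' ∧ ∀ l ∈ greedy Ω' (p + 2), ¬ Conflicts l (p + 3, p + 2)) :=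
    and_congr hm1 hc1
  have e2 : ((p + 3, p + 3) ∈ Ω ∧ ∀ l ∈ greedy Ω (p + 2), ¬ Conflicts l (p + 3, p + 3)) ↔
      ((p + 3, p + 3) ∈ Ω' ∧ ∀ l ∈ greedy Ω' (p + 2), ¬ Conflicts l (p + 3, p + 3)) :=
    and_congr hm2 hc2
  rw [hL, hR]
  simp only [e1, e2]
  split_ifs with h1 h2
  · rw [Finset.filter_insert, Finset.filter_insert, if_pos rfl, if_pos rfl, hemp, hemp']
  · rw [Finset.filter_insert, Finset.filter_insert, if_pos rfl, if_pos rfl, hemp, hemp']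
  · rw [hemp, hemp']
end

section
/- In a linear interference network with no erasures (p = 0), any zero-forcing scheme on K users in which every active receiver observes no interference delivers at most ⌈4K/5⌉ messages; hence the asymptotic per-user DoF achievable by zero-forcing with cooperation order 2 is at most 4/5. -/
/- Zero-forcing feasibility on the `K`-user linear network: delivered messages `S` with
transmit sets `send i ⊆ T i`, each delivered message reaching its receiver through a
non-erased link, and interference from every other message absent or canceled over the
air at every active receiver. -/
open Classical in
def Feasible (H : ℕ × ℕ → ℝ) (T : ℕ → Finset ℕ) (K : ℕ) (S : Finset ℕ) : Prop :=
  S ⊆ Finset.Icc 1 K ∧ ∃ send : ℕ → Finset ℕ,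
    (∀ i, send i ⊆ T i) ∧
    (∀ i ∈ S, ∃ j ∈ send i, H (i, j) ≠ 0) ∧
    (∀ i ∈ S, ∀ k, k ≠ i → ((send k).filter (fun j => H (i, j) ≠ 0)).card ≠ 1)

/-- In a finset whose cardinality is not 1, any element has a companion. -/
lemma zf_pair_mem {F : Finset ℕ} {e : ℕ} (he : e ∈ F) (h1 : F.card ≠ 1) :
    ∃ e' ∈ F, e' ≠ e := by
  by_contra h
  push_neg at h
  exact h1 (Finset.card_eq_one.mpr
    ⟨e, Finset.eq_singleton_iff_unique_mem.mpr ⟨he, fun x hx => h x hx⟩⟩)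

/-- A finset of card ≤ 2 cannot contain three distinct elements. -/
lemma zf_three_card {s : Finset ℕ} {x y z : ℕ} (hx : x ∈ s) (hy : y ∈ s) (hz : z ∈ s)
    (hxy : x ≠ y) (hxz : x ≠ z) (hyz : y ≠ z) (h : s.card ≤ 2) : False := by
  have hsub : ({x, y, z} : Finset ℕ) ⊆ s := by
    intro w hw
    simp only [Finset.mem_insert, Finset.mem_singleton] at hw
    rcases hw with rfl | rfl | rfl <;> assumption
  have hc : ({x, y, z} : Finset ℕ).card = 3 := by
    rw [Finset.card_insert_of_notMem (by simp [hxy, hxz]),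
        Finset.card_insert_of_notMem (by simp [hyz]), Finset.card_singleton]
  have := Finset.card_le_card hsub
  omega

/-- No five consecutive users can all be delivered. -/
lemma zf_no5 (K : ℕ) (H : ℕ × ℕ → ℝ)
    (hconn : ∀ i j, H (i, j) ≠ 0 ↔ ((j + 1 = i ∨ j = i) ∧ 1 ≤ j ∧ i ≤ K))
    (T : ℕ → Finset ℕ) (hT : ∀ i, (T i).card ≤ 2)
    (S : Finset ℕ) (hS : Feasible H T K S) (a : ℕ) (ha : 1 ≤ a) (haK : a + 4 ≤ K)
    (h0 : a ∈ S) (h1 : a + 1 ∈ S) (h2 : a + 2 ∈ S) (h3 : a + 3 ∈ S) (h4 : a + 4 ∈ S) :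
    False := by
  obtain ⟨hSsub, send, hsend, hdel, hint⟩ := hS
  have hc : ∀ k, (send k).card ≤ 2 := fun k => (Finset.card_le_card (hsend k)).trans (hT k)
  obtain ⟨j, hj, hHj⟩ := hdel (a + 2) h2
  rw [hconn] at hHj
  have hj' : j = a + 1 ∨ j = a + 2 := by omega
  rcases hj' with rfl | rfl
  · -- transmitter a+1 carries message a+2
    -- receiver a+1: forces a ∈ send (a+2)
    have key := hint (a + 1) h1 (a + 2) (by omega)
    have hm : a + 1 ∈ (send (a + 2)).filter (fun j => H (a + 1, j) ≠ 0) :=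
      Finset.mem_filter.mpr ⟨hj, (hconn _ _).mpr ⟨Or.inr rfl, by omega, by omega⟩⟩
    obtain ⟨e, heF, hne⟩ := zf_pair_mem hm key
    obtain ⟨heS, heH⟩ := Finset.mem_filter.mp heF
    rw [hconn] at heH
    have hea : e = a := by omega
    rw [hea] at heS
    -- receiver a: filter of send(a+2) contains a; its card must be ≠ 1
    have key2 := hint a h0 (a + 2) (by omega)
    have hm2 : a ∈ (send (a + 2)).filter (fun j => H (a, j) ≠ 0) :=
      Finset.mem_filter.mpr ⟨heS, (hconn _ _).mpr ⟨Or.inr rfl, by omega, by omega⟩⟩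
    obtain ⟨e', he'F, hne'⟩ := zf_pair_mem hm2 key2
    obtain ⟨he'S, he'H⟩ := Finset.mem_filter.mp he'F
    rw [hconn] at he'H
    -- e' = a - 1, so send (a+2) contains e', a, a+1 : three distinct elements
    exact zf_three_card he'S heS hj (by omega) (by omega) (by omega) (hc (a + 2))
  · -- transmitter a+2 carries message a+2
    -- receiver a+3: forces a+3 ∈ send (a+2)
    have key := hint (a + 3) h3 (a + 2) (by omega)
    have hm : a + 2 ∈ (send (a + 2)).filter (fun j => H (a + 3, j) ≠ 0) :=
      Finset.mem_filter.mpr ⟨hj, (hconn _ _).mpr ⟨Or.inl (by omega), by omega, by omega⟩⟩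
    obtain ⟨e, heF, hne⟩ := zf_pair_mem hm key
    obtain ⟨heS, heH⟩ := Finset.mem_filter.mp heF
    rw [hconn] at heH
    have hea : e = a + 3 := by omega
    rw [hea] at heS
    -- receiver a+4: forces a+4 ∈ send (a+2)
    have key2 := hint (a + 4) h4 (a + 2) (by omega)
    have hm2 : a + 3 ∈ (send (a + 2)).filter (fun j => H (a + 4, j) ≠ 0) :=
      Finset.mem_filter.mpr ⟨heS, (hconn _ _).mpr ⟨Or.inl (by omega), by omega, by omega⟩⟩
    obtain ⟨e', he'F, hne'⟩ := zf_pair_mem hm2 key2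
    obtain ⟨he'S, he'H⟩ := Finset.mem_filter.mp he'F
    rw [hconn] at he'H
    -- e' = a + 4, so send (a+2) contains a+2, a+3, a+4
    exact zf_three_card hj heS he'S (by omega) (by omega) (by omega) (hc (a + 2))

/-- Counting: a subset of `[1,K]` with no 5 consecutive elements has at most `⌈4K/5⌉`
elements. -/
lemma zf_count : ∀ K : ℕ, ∀ S : Finset ℕ, S ⊆ Finset.Icc 1 K →
    (∀ a, 1 ≤ a → a + 4 ≤ K →
      ¬(a ∈ S ∧ a + 1 ∈ S ∧ a + 2 ∈ S ∧ a + 3 ∈ S ∧ a + 4 ∈ S)) →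
    S.card ≤ (4 * K + 4) / 5 := by
  intro K
  induction K using Nat.strong_induction_on with
  | _ K ih =>
    intro S hsub hwin
    by_cases hK : K ≤ 4
    · have := Finset.card_le_card hsub
      rw [Nat.card_Icc] at this
      omega
    · push_neg at hK
      classical
      have hsplit := Finset.card_filter_add_card_filter_not
        (s := S) (p := fun x => x ≤ K - 5)
      simp only [not_le] at hsplit
      have h1 : (S.filter (fun x => x ≤ K - 5)).card ≤ (4 * (K - 5) + 4) / 5 := by
        apply ih (K - 5) (by omega)
        · intro x hx
          have hx' := Finset.mem_filter.mp hx
          have := Finset.mem_Icc.mp (hsub hx'.1)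
          rw [Finset.mem_Icc]; omega
        · intro a ha haK h
          refine hwin a ha (by omega) ?_
          obtain ⟨c0, c1, c2, c3, c4⟩ := h
          exact ⟨(Finset.mem_filter.mp c0).1, (Finset.mem_filter.mp c1).1,
            (Finset.mem_filter.mp c2).1, (Finset.mem_filter.mp c3).1,
            (Finset.mem_filter.mp c4).1⟩
      have h2sub : (S.filter (fun x => K - 5 < x)) ⊆ Finset.Icc (K - 4) K := by
        intro x hx
        have hx' := Finset.mem_filter.mp hx
        have := Finset.mem_Icc.mp (hsub hx'.1)
        rw [Finset.mem_Icc]; omega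
      have h2 : (S.filter (fun x => K - 5 < x)).card ≤ 4 := by
        by_contra h
        push_neg at h
        have hcI : (Finset.Icc (K - 4) K).card = 5 := by rw [Nat.card_Icc]; omega
        have heq := Finset.eq_of_subset_of_card_le h2sub (by omega)
        have hmem : ∀ t, K - 4 ≤ t → t ≤ K → t ∈ S := by
          intro t ht1 ht2
          have : t ∈ S.filter (fun x => K - 5 < x) := by
            rw [heq, Finset.mem_Icc]; exact ⟨ht1, ht2⟩
          exact (Finset.mem_filter.mp this).1
        exact hwin (K - 4) (by omega) (by omega)
          ⟨hmem _ (by omega) (by omega), hmem _ (by omega) (by omega),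
           hmem _ (by omega) (by omega), hmem _ (by omega) (by omega),
           hmem _ (by omega) (by omega)⟩
      omega

/-- with no erasures (all links present), any zero-forcing scheme on `K`
users with cooperation order 2 (`|T_i| ≤ 2`) delivers at most `⌈4K/5⌉` messages; hence
the asymptotic per-user DoF of zero-forcing with cooperation order 2 is at most `4/5`.
(In every window of 5 consecutive users at most 4 messages are delivered.) -/
theorem stmt10 (K : ℕ) (H : ℕ × ℕ → ℝ)
    (hconn : ∀ i j, H (i, j) ≠ 0 ↔ ((j + 1 = i ∨ j = i) ∧ 1 ≤ j ∧ i ≤ K))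
    (T : ℕ → Finset ℕ) (hT : ∀ i, (T i).card ≤ 2)
    (S : Finset ℕ) (hS : Feasible H T K S) :
    S.card ≤ (4 * K + 4) / 5 := by
  refine zf_count K S hS.1 ?_
  intro a ha haK h
  exact zf_no5 K H hconn T hT S hS a ha haK h.1 h.2.1 h.2.2.1 h.2.2.2.1 h.2.2.2.2
end

section
/- For the message assignment T_i = {i-1, i} for all i (each message at the two transmitters connected to its destination), in a network realization where all links exist, the greedy zero-forcing algorithm delivers exactly ⌈K/2⌉ of the K messages, so the per-user DoF with this assignment at p = 0 is 1/2. -/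
lemma mem_linkSet {K : ℕ} {H : ℕ × ℕ → ℝ}
    (hconn : ∀ i j, H (i, j) ≠ 0 ↔ ((j + 1 = i ∨ j = i) ∧ 1 ≤ j ∧ i ≤ K))
    {T : ℕ → Finset ℕ} (hT : ∀ i, T i = {i - 1, i}) {a b : ℕ} :
    (a, b) ∈ linkSet H T K ↔ (b + 1 = a ∨ b = a) ∧ 1 ≤ b ∧ a ≤ K := by
  simp only [linkSet, Finset.mem_filter, Finset.mem_product, Finset.mem_Icc, hconn, hT,
    Finset.mem_insert, Finset.mem_singleton]
  omega

def oddSet (i : ℕ) : Finset (ℕ × ℕ) :=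
  ((Finset.Icc 1 i).filter (fun j => Odd j)).image (fun j => (j, j))

lemma mem_oddSet {i : ℕ} {l : ℕ × ℕ} :
    l ∈ oddSet i ↔ ∃ j, 1 ≤ j ∧ j ≤ i ∧ Odd j ∧ l = (j, j) := by
  simp only [oddSet, Finset.mem_image, Finset.mem_filter, Finset.mem_Icc]
  constructor
  · rintro ⟨j, ⟨⟨h1, h2⟩, h3⟩, rfl⟩; exact ⟨j, h1, h2, h3, rfl⟩
  · rintro ⟨j, h1, h2, h3, rfl⟩; exact ⟨j, ⟨⟨h1, h2⟩, h3⟩, rfl⟩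

lemma greedy_eq {K : ℕ} {H : ℕ × ℕ → ℝ}
    (hconn : ∀ i j, H (i, j) ≠ 0 ↔ ((j + 1 = i ∨ j = i) ∧ 1 ≤ j ∧ i ≤ K))
    {T : ℕ → Finset ℕ} (hT : ∀ i, T i = {i - 1, i}) :
    ∀ i, i ≤ K → greedy (linkSet H T K) i = oddSet i := by
  intro i
  induction i with
  | zero => intro _; simp [greedy, oddSet]
  | succ n ih =>
    intro hle
    have hS := ih (by omega)
    rw [greedy, hS]
    rcases Nat.even_or_odd n with hn | hn
    · -- n even, n+1 odd: (n+1,n) either not in Ω (n=0) or conflicts with (n-1,n-1);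
      -- (n+1,n+1) gets inserted.
      have h1 : ¬ ((n + 1, n) ∈ linkSet H T K ∧
          ∀ l ∈ oddSet n, ¬ Conflicts l (n + 1, n)) := by
        rintro ⟨hmem, hconf⟩
        rw [mem_linkSet hconn hT] at hmem
        have hn1 : 1 ≤ n := hmem.2.1
        have hn2 : 2 ≤ n := by rcases hn with ⟨k, rfl⟩; omega
        have hm : ((n - 1 : ℕ), (n - 1 : ℕ)) ∈ oddSet n := by
          rw [mem_oddSet]
          exact ⟨n - 1, by omega, by omega, by rcases hn with ⟨k, hk⟩; exact ⟨k - 1, by omega⟩, rfl⟩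
        apply hconf _ hm
        left
        constructor
        · simp
        · right; simp; omega
      rw [if_neg h1]
      have h2 : ((n + 1, n + 1) ∈ linkSet H T K ∧
          ∀ l ∈ oddSet n, ¬ Conflicts l (n + 1, n + 1)) := by
        constructor
        · rw [mem_linkSet hconn hT]; exact ⟨Or.inr rfl, by omega, hle⟩
        · intro l hl
          rw [mem_oddSet] at hl
          obtain ⟨j, hj1, hj2, hjo, rfl⟩ := hl
          have hjne : j ≠ n := by rintro rfl; exact (Nat.not_odd_iff_even.mpr hn) hjo
          rintro (⟨_, h | ⟨h, _⟩⟩ | ⟨h, _⟩ | ⟨h, _⟩)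
          · simp at h; omega
          · simp at h; omega
          · simp at h; omega
          · simp at h; omega
      rw [if_pos h2]
      ext l
      rw [Finset.mem_insert, mem_oddSet, mem_oddSet]
      constructor
      · rintro (rfl | ⟨j, hj1, hj2, hjo, rfl⟩)
        · exact ⟨n + 1, by omega, le_rfl, Even.add_one hn, rfl⟩
        · exact ⟨j, hj1, by omega, hjo, rfl⟩
      · rintro ⟨j, hj1, hj2, hjo, rfl⟩
        rcases eq_or_lt_of_le hj2 with rfl | hlt
        · exact Or.inl rfl
        · exact Or.inr ⟨j, hj1, by omega, hjo, rfl⟩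
    · -- n odd: (n,n) ∈ S conflicts with both candidates; set unchanged.
      have hm : ((n : ℕ), (n : ℕ)) ∈ oddSet n := by
        rw [mem_oddSet]; exact ⟨n, hn.pos, le_rfl, hn, rfl⟩
      have h1 : ¬ ((n + 1, n) ∈ linkSet H T K ∧
          ∀ l ∈ oddSet n, ¬ Conflicts l (n + 1, n)) := by
        rintro ⟨_, hconf⟩
        exact hconf _ hm (Or.inl ⟨by simp, Or.inl rfl⟩)
      have h2 : ¬ ((n + 1, n + 1) ∈ linkSet H T K ∧
          ∀ l ∈ oddSet n, ¬ Conflicts l (n + 1, n + 1)) := by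
        rintro ⟨_, hconf⟩
        exact hconf _ hm (Or.inl ⟨by simp, Or.inr ⟨by simp, Or.inr rfl⟩⟩)
      rw [if_neg h1, if_neg h2]
      ext l
      rw [mem_oddSet, mem_oddSet]
      constructor
      · rintro ⟨j, hj1, hj2, hjo, rfl⟩; exact ⟨j, hj1, by omega, hjo, rfl⟩
      · rintro ⟨j, hj1, hj2, hjo, rfl⟩
        refine ⟨j, hj1, ?_, hjo, rfl⟩
        rcases eq_or_lt_of_le hj2 with rfl | hlt
        · exfalso; rcases hn with ⟨k, rfl⟩; rcases hjo with ⟨m, hm⟩; omega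
        · omega

lemma oddSet_card (i : ℕ) : (oddSet i).card = (i + 1) / 2 := by
  rw [oddSet, Finset.card_image_of_injective _ (fun a b h => (Prod.mk.injEq _ _ _ _).mp h |>.1)]
  induction i with
  | zero => simp
  | succ n ih =>
    rw [show Finset.Icc 1 (n + 1) = insert (n + 1) (Finset.Icc 1 n) by
      ext x; simp [Finset.mem_Icc]; omega]
    rw [Finset.filter_insert]
    by_cases h : Odd (n + 1)
    · rw [if_pos h, Finset.card_insert_of_notMem (by simp), ih]
      rcases h with ⟨k, hk⟩; omega
    · rw [if_neg h, ih]
      rw [Nat.not_odd_iff_even] at h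
      rcases h with ⟨k, hk⟩; omega

/-- for the assignment `T_i = {i-1, i}` (each message at the two
transmitters connected to its destination) and a fully connected network realization,
the greedy zero-forcing algorithm delivers exactly `⌈K/2⌉` of the `K` messages, so the
per-user DoF with this assignment at `p = 0` is `1/2`. -/
theorem stmt11 (K : ℕ) (H : ℕ × ℕ → ℝ)
    (hconn : ∀ i j, H (i, j) ≠ 0 ↔ ((j + 1 = i ∨ j = i) ∧ 1 ≤ j ∧ i ≤ K))
    (T : ℕ → Finset ℕ) (hT : ∀ i, T i = {i - 1, i}) :
    (greedy (linkSet H T K) K).card = (K + 1) / 2 := by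
  rw [greedy_eq hconn hT K le_rfl, oddSet_card]
end

section
/- For a cluster of N users in which every cross link exists and every message satisfies T_i ∋ i with H(i,i) ≠ 0 for all i, the greedy algorithm activates user 1 (sets b_{1,1} = 1), and in general the number of delivered messages is at least ⌈N/2⌉. -/
/-!
Receiver `i + 1` is always offered its direct link `(i + 1, i + 1)`, and that link conflicts
only with links whose receiver is `i` or later (every link has transmitter at most its
receiver). So if receiver `i` ends up inactive, receiver `i + 1` is served: the served
receivers hit every pair `{i, i + 1}`. Receiver `1` is served since there is no transmitter
`0`; together with the pairs `{2k, 2k + 1}` this gives `⌈N/2⌉` distinct served receivers.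
-/

theorem not_conflicts_diag {l : ℕ × ℕ} {i : ℕ} (hl : l.2 ≤ l.1) (hli : l.1 < i) :
    ¬ Conflicts l (i + 1, i + 1) := by
  rintro (⟨-, h | ⟨h | h, -⟩⟩ | ⟨h, -⟩ | ⟨h, -⟩) <;> simp only at h <;> omega

namespace greedy

variable (Ω : Finset (ℕ × ℕ))

theorem subset : ∀ j, greedy Ω j ⊆ Ω
  | 0 => Finset.empty_subset _
  | i + 1 => by
    rw [greedy]
    split_ifs with h₁ h₂
    · exact Finset.insert_subset h₁.1 (subset i)
    · exact Finset.insert_subset h₂.1 (subset i)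
    · exact subset i

theorem fst_le : ∀ j, ∀ l ∈ greedy Ω j, l.1 ≤ j
  | 0, l, hl => by simp [greedy] at hl
  | i + 1, l, hl => by
    have ih := fst_le i l
    rw [greedy] at hl
    split_ifs at hl
    · rcases Finset.mem_insert.mp hl with rfl | hl
      exacts [le_rfl, (ih hl).trans i.le_succ]
    · rcases Finset.mem_insert.mp hl with rfl | hl
      exacts [le_rfl, (ih hl).trans i.le_succ]
    · exact (ih hl).trans i.le_succ

theorem monotone : Monotone (greedy Ω) :=
  monotone_nat_of_le_succ fun i => by
    rw [greedy]
    split_ifs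
    exacts [Finset.subset_insert _ _, Finset.subset_insert _ _, subset_rfl]

theorem exists_fst_eq_succ_of_diag {i : ℕ} (hmem : (i + 1, i + 1) ∈ Ω)
    (hfree : ∀ l ∈ greedy Ω i, ¬ Conflicts l (i + 1, i + 1)) :
    ∃ l ∈ greedy Ω (i + 1), l.1 = i + 1 := by
  rw [greedy]
  split_ifs with h₁ h₂
  · exact ⟨_, Finset.mem_insert_self _ _, rfl⟩
  · exact ⟨_, Finset.mem_insert_self _ _, rfl⟩
  · exact absurd ⟨hmem, hfree⟩ h₂

theorem exists_fst_eq_or_succ (hΩ : ∀ l ∈ Ω, l.2 ≤ l.1) {i j : ℕ}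
    (hdiag : (i + 1, i + 1) ∈ Ω) (hij : i + 1 ≤ j) :
    ∃ l ∈ greedy Ω j, l.1 = i ∨ l.1 = i + 1 := by
  by_cases hi : ∃ l ∈ greedy Ω j, l.1 = i
  · obtain ⟨l, hl, rfl⟩ := hi
    exact ⟨l, hl, .inl rfl⟩
  push Not at hi
  have hfree : ∀ l ∈ greedy Ω i, ¬ Conflicts l (i + 1, i + 1) := fun l hl =>
    not_conflicts_diag (hΩ l (subset Ω i hl))
      ((fst_le Ω i l hl).lt_of_ne (hi l (monotone Ω (by omega) hl)))
  obtain ⟨l, hl, hl₁⟩ := exists_fst_eq_succ_of_diag Ω hdiag hfree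
  exact ⟨l, monotone Ω hij hl, .inr hl₁⟩

theorem one_one_mem_one (h₀ : (1, 0) ∉ Ω) (h₁ : (1, 1) ∈ Ω) : (1, 1) ∈ greedy Ω 1 := by
  simp [greedy, h₀, h₁]

end greedy

section linkSet

variable {H : ℕ × ℕ → ℝ} {T : ℕ → Finset ℕ} {N : ℕ}

theorem mem_linkSet_s13 {l : ℕ × ℕ} :
    l ∈ linkSet H T N ↔ (1 ≤ l.1 ∧ l.1 ≤ N) ∧ l.2 ≤ N ∧
      (l.2 + 1 = l.1 ∨ l.2 = l.1) ∧ l.2 ∈ T l.1 ∧ H (l.1, l.2) ≠ 0 := by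
  simp [linkSet, and_assoc]

theorem snd_le_fst_of_mem_linkSet {l : ℕ × ℕ} (h : l ∈ linkSet H T N) : l.2 ≤ l.1 := by
  rcases (mem_linkSet_s13.mp h).2.2.1 with h | h <;> omega

theorem diag_mem_linkSet {i : ℕ} (hi : 1 ≤ i) (hiN : i ≤ N) (hT : i ∈ T i) (hH : H (i, i) ≠ 0) :
    (i, i) ∈ linkSet H T N :=
  mem_linkSet_s13.mpr ⟨⟨hi, hiN⟩, hiN, .inr rfl, hT, hH⟩

theorem one_zero_not_mem_linkSet (h : H (1, 0) = 0) : (1, 0) ∉ linkSet H T N :=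
  fun hmem => (mem_linkSet_s13.mp hmem).2.2.2.2 h

end linkSet

theorem Finset.succ_div_two_le_card_of_hits_consecutive {α : Type*} {s : Finset α} (f : α → ℕ)
    {N : ℕ} (h₁ : ∃ a ∈ s, f a = 1)
    (h : ∀ i, 1 ≤ i → i + 1 ≤ N → ∃ a ∈ s, f a = i ∨ f a = i + 1) :
    (N + 1) / 2 ≤ s.card := by
  have hcover : Finset.range ((N - 1) / 2 + 1) ⊆ s.image (f · / 2) := by
    intro k hk
    rw [Finset.mem_range] at hk
    obtain ⟨a, ha, hfa⟩ : ∃ a ∈ s, f a / 2 = k := by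
      rcases Nat.eq_zero_or_pos k with rfl | hk₀
      · obtain ⟨a, ha, hfa⟩ := h₁
        exact ⟨a, ha, by omega⟩
      · obtain ⟨a, ha, hfa⟩ := h (2 * k) (by omega) (by omega)
        exact ⟨a, ha, by omega⟩
    exact Finset.mem_image.mpr ⟨a, ha, hfa⟩
  calc (N + 1) / 2 ≤ (Finset.range ((N - 1) / 2 + 1)).card := by rw [Finset.card_range]; omega
    _ ≤ (s.image (f · / 2)).card := Finset.card_le_card hcover
    _ ≤ s.card := Finset.card_image_le

/-- for a cluster of `N` users in which every direct link exists and
`i ∈ T_i` for all `i`, the greedy algorithm activates user 1 (`b_{1,1} = 1`), no two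
consecutive users are both undelivered (the delivered set hits every pair
`{2k-1, 2k}`), and hence at least `⌈N/2⌉` messages are delivered. -/
theorem stmt13 (N : ℕ) (hN : 1 ≤ N) (H : ℕ × ℕ → ℝ) (T : ℕ → Finset ℕ)
    (hdirect : ∀ i, 1 ≤ i → i ≤ N → H (i, i) ≠ 0)
    (hTi : ∀ i, 1 ≤ i → i ≤ N → i ∈ T i)
    (hno0 : ∀ i, H (i, 0) = 0) :              -- there is no transmitter `0`
    (1, 1) ∈ greedy (linkSet H T N) N ∧
    (∀ k, 1 ≤ k → 2 * k ≤ N →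
      ∃ l ∈ greedy (linkSet H T N) N, l.1 = 2 * k - 1 ∨ l.1 = 2 * k) ∧
    (N + 1) / 2 ≤ (greedy (linkSet H T N) N).card := by
  set Ω := linkSet H T N
  have hdiag : ∀ i, 1 ≤ i → i ≤ N → (i, i) ∈ Ω := fun i hi hiN =>
    diag_mem_linkSet hi hiN (hTi i hi hiN) (hdirect i hi hiN)
  have hone : (1, 1) ∈ greedy Ω N :=
    greedy.monotone Ω hN (greedy.one_one_mem_one Ω (one_zero_not_mem_linkSet (hno0 1))
      (hdiag 1 le_rfl hN))
  have hpair : ∀ i, 1 ≤ i → i + 1 ≤ N → ∃ l ∈ greedy Ω N, l.1 = i ∨ l.1 = i + 1 :=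
    fun i _ hiN => greedy.exists_fst_eq_or_succ Ω (fun _ => snd_le_fst_of_mem_linkSet)
      (hdiag (i + 1) (by omega) hiN) hiN
  refine ⟨hone, fun k hk hkN => ?_, ?_⟩
  · obtain ⟨l, hl, hl₁⟩ := hpair (2 * k - 1) (by omega) (by omega)
    exact ⟨l, hl, by omega⟩
  · exact Finset.succ_div_two_le_card_of_hits_consecutive Prod.fst ⟨_, hone, rfl⟩ hpair
end
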